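/- The function d : [0,1] × [0,1] → ℝ is a continuous pseudo-distance: for all r, s, t ∈ [0,1] one has 0 ≤ d(s,t) ≤ 2·sup_{[0,1]} f < ∞, d(s,s) = 0, d(s,t) = d(t,s), and d(s,t) ≤ d(s,r) + d(r,t); moreover the map (s,t) ↦ d(s,t) is continuous on [0,1]². -/

import Mathlib

open Set Filter

/-- The infimum `I_s^t` of `f` over the interval `[s, t]`. -/
noncomputable def infIcc (f : ℝ → ℝ) (s t : ℝ) : ℝ := sInf (f '' Set.Icc s t)

/-- The genealogical relation `s ≼ t` associated with the excursion-type function `f`,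
where `fl` is the left-limit function of `f` (with the convention `fl 0 = 0`):
`s ≼ t ↔ s ≤ t ∧ f(s-) ≤ I_s^t`. -/
def Prec (f fl : ℝ → ℝ) (s t : ℝ) : Prop := s ≤ t ∧ fl s ≤ infIcc f s t

/-- The jump `Δ_t = f(t) - f(t-)` of `f` at `t` (with the convention `fl 0 = 0`
this gives `Δ_0 = 0` for `f 0 = 0`). -/
def jump (f fl : ℝ → ℝ) (t : ℝ) : ℝ := f t - fl t

/-- The position `x_s^t = I_s^t - f(s-)` of the ancestral line of `t` in the loop at `s`. -/
noncomputable def xpos (f fl : ℝ → ℝ) (s t : ℝ) : ℝ := infIcc f s t - fl s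

/-- Distance on the cycle of length `D`: `δ_D(a,b) = min (|a-b|, D - |a-b|)`. -/
def cycleDist (D a b : ℝ) : ℝ := min |a - b| (D - |a - b|)

/-- `d₀(s,t) = ∑_{s ≺ r ≼ t} δ_{Δ_r}(0, x_r^t)`. -/
noncomputable def dZero (f fl : ℝ → ℝ) (s t : ℝ) : ℝ :=
  ∑' r : {r : ℝ // Prec f fl s r ∧ s ≠ r ∧ Prec f fl r t},
    cycleDist (jump f fl r.1) 0 (xpos f fl r.1 t)

/-- The most recent common ancestor `s ∧ t` of `s` and `t`: the greatest common
`≼`-lower bound of `s` and `t` in `[0,1]`, realized as the supremum of the set of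
common lower bounds. -/
noncomputable def mca (f fl : ℝ → ℝ) (s t : ℝ) : ℝ :=
  sSup {r : ℝ | r ∈ Set.Icc (0:ℝ) 1 ∧ Prec f fl r s ∧ Prec f fl r t}

/-- The looptree pseudo-distance
`d(s,t) = δ_{Δ_{s∧t}}(x_{s∧t}^s, x_{s∧t}^t) + d₀(s∧t, s) + d₀(s∧t, t)`. -/
noncomputable def looptreeDist (f fl : ℝ → ℝ) (s t : ℝ) : ℝ :=
  cycleDist (jump f fl (mca f fl s t)) (xpos f fl (mca f fl s t) s) (xpos f fl (mca f fl s t) t)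
    + dZero f fl (mca f fl s t) s + dZero f fl (mca f fl s t) t

/-!
Write `loopPos r u` for the point of the loop at `r` (a circle of length `Δ_r`) through which
the ancestral line of `u` leaves that loop, and `0` when `r` is not an ancestor of `u`. Then
`d(s,t)` is the sum over all `r` of the cycle distance between `loopPos r s` and `loopPos r t`:
loops strictly below `s ∧ t` see `s` and `t` at the same point, the loop at `s ∧ t` gives the
first term of `d`, and the loops on the two ancestral lines above `s ∧ t` give `d₀`. Nonnegativity
and the triangle inequality therefore hold loop by loop.

The sums `d₀(s,t)` telescope: for successive ancestors `r < r'` of `t` one has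
`I_r^t ≤ f(r'-)`, so the intervals `(f(r-), I_r^t)` are disjoint. This gives `d(s,t) ≤ f s + f t`
and `d(u,v) ≤ 3 (B - A)` whenever `A ≤ f ≤ B` on `[u,v)` and `A ≤ f v`. Right continuity and left
limits of `f` make the latter bound small for `u` close to `v` on either side, and continuity of
`d` follows from the triangle inequality.
-/

open Topology

theorem Finset.sum_sub_le_of_chain {ι : Type*} [LinearOrder ι] (F : Finset ι) {a b : ι → ℝ}
    {A B : ℝ} (hAB : A ≤ B) (hA : ∀ i ∈ F, A ≤ a i) (hB : ∀ i ∈ F, b i ≤ B)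
    (hchain : ∀ i ∈ F, ∀ j ∈ F, i < j → b i ≤ a j) :
    ∑ i ∈ F, (b i - a i) ≤ B - A := by
  classical
  induction F using Finset.induction_on_max generalizing B with
  | empty => simpa using hAB
  | insert j F hlt ih =>
    have hj : j ∈ insert j F := Finset.mem_insert_self j F
    have hF : ∀ i ∈ F, i ∈ insert j F := fun i hi => Finset.mem_insert_of_mem hi
    have hrest : ∑ i ∈ F, (b i - a i) ≤ a j - A :=
      ih (hA j hj) (fun i hi => hA i (hF i hi)) (fun i hi => hchain i (hF i hi) j hj (hlt i hi))
        (fun i hi k hk => hchain i (hF i hi) k (hF k hk))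
    rw [Finset.sum_insert fun h => (hlt j h).false]
    linarith [hB j hj]

theorem eventually_nhdsWithin_Icc_of_sides {α : Type*} [LinearOrder α] [TopologicalSpace α]
    [OrderTopology α] {a b x : α} {P : α → Prop} (hlt : a < x → ∀ᶠ y in 𝓝[<] x, P y)
    (hx : P x) (hgt : x < b → ∀ᶠ y in 𝓝[>] x, P y) : ∀ᶠ y in 𝓝[Icc a b] x, P y := by
  rw [eventually_nhdsWithin_iff, ← nhdsNE_sup_pure, ← nhdsLT_sup_nhdsGT]
  refine ⟨⟨?_, ?_⟩, fun _ => hx⟩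
  · rcases lt_or_ge a x with hax | hxa
    · exact (hlt hax).mono fun y hy _ => hy
    · filter_upwards [self_mem_nhdsWithin] with y (hy : y < x) hmem
      exact absurd (hmem.1.trans_lt (hy.trans_le hxa)) (lt_irrefl a)
  · rcases lt_or_ge x b with hxb | hbx
    · exact (hgt hxb).mono fun y hy _ => hy
    · filter_upwards [self_mem_nhdsWithin] with y (hy : x < y) hmem
      exact absurd ((hbx.trans_lt hy).trans_le hmem.2) (lt_irrefl b)

theorem eventually_Icc_subset_of_mem_nhdsGE {α : Type*} [LinearOrder α] [TopologicalSpace α]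
    [OrderTopology α] [NoMaxOrder α] {x : α} {S : Set α} (hS : S ∈ 𝓝[≥] x) :
    ∀ᶠ y in 𝓝[≥] x, Icc x y ⊆ S := by
  obtain ⟨c, hc, hsub⟩ := mem_nhdsGE_iff_exists_Ico_subset.1 hS
  filter_upwards [Ico_mem_nhdsGE hc] with y hy using (Icc_subset_Ico_right hy.2).trans hsub

theorem eventually_Ico_subset_of_mem_nhdsLT {α : Type*} [LinearOrder α] [TopologicalSpace α]
    [OrderTopology α] [NoMinOrder α] {x : α} {S : Set α} (hS : S ∈ 𝓝[<] x) :
    ∀ᶠ y in 𝓝[<] x, Ico y x ⊆ S := by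
  obtain ⟨l, hl, hsub⟩ := mem_nhdsLT_iff_exists_Ioo_subset.1 hS
  filter_upwards [Ioo_mem_nhdsLT hl] with y hy using (Ico_subset_Ioo_left hy.1).trans hsub

theorem IsCompact.bddAbove_image_of_eventually_le {X α : Type*} [TopologicalSpace X]
    [SemilatticeSup α] [Nonempty α] {K : Set X} (hK : IsCompact K) {f : X → α}
    (hf : ∀ x ∈ K, ∃ C, ∀ᶠ y in 𝓝[K] x, f y ≤ C) : BddAbove (f '' K) := by
  refine hK.induction_on (p := fun s => BddAbove (f '' s)) (by simp)
    (fun s t hst ht => ht.mono (image_mono hst))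
    (fun s t hs ht => by rw [image_union]; exact hs.union ht) fun x hx => ?_
  obtain ⟨C, hC⟩ := hf x hx
  exact ⟨{y | f y ≤ C}, hC, C, forall_mem_image.2 fun _ hy => hy⟩

theorem continuousOn_of_triangle_of_tendsto_zero {X : Type*} [TopologicalSpace X] {S : Set X}
    {d : X → X → ℝ} (hcomm : ∀ x ∈ S, ∀ y ∈ S, d x y = d y x)
    (htri : ∀ x ∈ S, ∀ y ∈ S, ∀ z ∈ S, d x z ≤ d x y + d y z)
    (hlim : ∀ x ∈ S, Tendsto (fun y => d y x) (𝓝[S] x) (𝓝 0)) :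
    ContinuousOn (fun p : X × X => d p.1 p.2) (S ×ˢ S) := by
  rintro ⟨x₁, x₂⟩ ⟨hx₁, hx₂⟩
  have h₁ : Tendsto (fun p : X × X => d p.1 x₁) (𝓝[S ×ˢ S] (x₁, x₂)) (𝓝 0) :=
    (hlim x₁ hx₁).comp (continuousWithinAt_fst.tendsto_nhdsWithin fun _ hp => hp.1)
  have h₂ : Tendsto (fun p : X × X => d p.2 x₂) (𝓝[S ×ˢ S] (x₁, x₂)) (𝓝 0) :=
    (hlim x₂ hx₂).comp (continuousWithinAt_snd.tendsto_nhdsWithin fun _ hp => hp.2)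
  have herr := h₁.add h₂
  rw [add_zero] at herr
  refine tendsto_of_tendsto_of_tendsto_of_le_of_le' (by simpa using tendsto_const_nhds.sub herr)
    (by simpa using tendsto_const_nhds.add herr) ?_ ?_ <;>
  filter_upwards [self_mem_nhdsWithin] with ⟨y₁, y₂⟩ ⟨hy₁, hy₂⟩ <;> dsimp only
  · linarith [htri x₁ hx₁ y₁ hy₁ x₂ hx₂, htri y₁ hy₁ y₂ hy₂ x₂ hx₂, hcomm x₁ hx₁ y₁ hy₁]
  · linarith [htri y₁ hy₁ x₁ hx₁ y₂ hy₂, htri x₁ hx₁ x₂ hx₂ y₂ hy₂, hcomm x₂ hx₂ y₂ hy₂]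

theorem cycleDist_comm (D a b : ℝ) : cycleDist D a b = cycleDist D b a := by
  rw [cycleDist, cycleDist, abs_sub_comm]

theorem cycleDist_self {D : ℝ} (hD : 0 ≤ D) (a : ℝ) : cycleDist D a a = 0 := by
  simp [cycleDist, hD]

theorem cycleDist_zero_self {D : ℝ} (hD : 0 ≤ D) : cycleDist D 0 D = 0 := by
  simp [cycleDist, abs_of_nonneg hD, hD]

theorem cycleDist_le_abs (D a b : ℝ) : cycleDist D a b ≤ |a - b| := min_le_left _ _

theorem cycleDist_zero_le {D a : ℝ} (ha : 0 ≤ a) : cycleDist D 0 a ≤ a :=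
  (cycleDist_le_abs D 0 a).trans (by rw [zero_sub, abs_neg, abs_of_nonneg ha])

theorem cycleDist_nonneg {D a b : ℝ} (ha : a ∈ Icc 0 D) (hb : b ∈ Icc 0 D) :
    0 ≤ cycleDist D a b :=
  le_min (abs_nonneg _) <| sub_nonneg.2 <|
    abs_sub_le_iff.2 ⟨by linarith [ha.2, hb.1], by linarith [hb.2, ha.1]⟩

theorem cycleDist_triangle {D a b c : ℝ} (ha : a ∈ Icc 0 D) (hb : b ∈ Icc 0 D)
    (hc : c ∈ Icc 0 D) : cycleDist D a c ≤ cycleDist D a b + cycleDist D b c := by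
  obtain ⟨ha₀, haD⟩ := ha
  obtain ⟨hb₀, hbD⟩ := hb
  obtain ⟨hc₀, hcD⟩ := hc
  simp only [cycleDist, min_def]
  rcases abs_cases (a - b) with ⟨e₁, s₁⟩ | ⟨e₁, s₁⟩ <;>
    rcases abs_cases (b - c) with ⟨e₂, s₂⟩ | ⟨e₂, s₂⟩ <;>
    rcases abs_cases (a - c) with ⟨e₃, s₃⟩ | ⟨e₃, s₃⟩ <;>
    simp only [e₁, e₂, e₃] <;> split_ifs <;> linarith

def ancestralLine (f fl : ℝ → ℝ) (s t : ℝ) : Set ℝ :=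
  {r | Prec f fl s r ∧ s ≠ r ∧ Prec f fl r t}

open Classical in
noncomputable def loopPos (f fl : ℝ → ℝ) (r u : ℝ) : ℝ :=
  if Prec f fl r u then xpos f fl r u else 0

noncomputable def loopDist (f fl : ℝ → ℝ) (s t r : ℝ) : ℝ :=
  (Icc (0:ℝ) 1).indicator
    (fun r => cycleDist (jump f fl r) (loopPos f fl r s) (loopPos f fl r t)) r

section

variable {f fl : ℝ → ℝ}

theorem le_infIcc {s t c : ℝ} (hst : s ≤ t) (h : ∀ u ∈ Icc s t, c ≤ f u) : c ≤ infIcc f s t :=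
  le_csInf ((nonempty_Icc.2 hst).image f) (forall_mem_image.2 h)

theorem infIcc_self (t : ℝ) : infIcc f t t = f t := by
  simp [infIcc]

theorem xpos_self (r : ℝ) : xpos f fl r r = jump f fl r := by
  rw [xpos, jump, infIcc_self]

theorem xpos_nonneg {m u : ℝ} (h : Prec f fl m u) : 0 ≤ xpos f fl m u :=
  sub_nonneg.2 h.2

theorem le_mca {s t r : ℝ} (hr : r ∈ Icc (0:ℝ) 1) (hrs : Prec f fl r s) (hrt : Prec f fl r t) :
    r ≤ mca f fl s t :=
  le_csSup ⟨s, fun _ h => h.2.1.1⟩ ⟨hr, hrs, hrt⟩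

theorem mca_comm (s t : ℝ) : mca f fl s t = mca f fl t s := by
  simp only [mca, and_comm]

theorem dZero_self (s : ℝ) : dZero f fl s s = 0 :=
  have : IsEmpty {r : ℝ // Prec f fl s r ∧ s ≠ r ∧ Prec f fl r s} :=
    ⟨fun r => r.2.2.1 (le_antisymm r.2.1.1 r.2.2.2.1)⟩
  tsum_empty

theorem looptreeDist_comm (s t : ℝ) : looptreeDist f fl s t = looptreeDist f fl t s := by
  rw [looptreeDist, looptreeDist, mca_comm t s, cycleDist_comm, add_right_comm]

theorem mem_Icc_of_mem_ancestralLine {s t r : ℝ} (hs0 : 0 ≤ s) (ht1 : t ≤ 1)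
    (hr : r ∈ ancestralLine f fl s t) : r ∈ Icc (0:ℝ) 1 :=
  ⟨hs0.trans hr.1.1, hr.2.2.1.trans ht1⟩

theorem loopPos_of_prec {r u : ℝ} (h : Prec f fl r u) :
    loopPos f fl r u = xpos f fl r u :=
  if_pos h

theorem loopPos_of_not_prec {r u : ℝ} (h : ¬ Prec f fl r u) :
    loopPos f fl r u = 0 :=
  if_neg h

end

structure IsCodingFunction (f fl : ℝ → ℝ) : Prop where
  tendsto_right : ∀ t ∈ Ico (0:ℝ) 1, Tendsto f (𝓝[≥] t) (𝓝 (f t))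
  tendsto_left : ∀ t ∈ Ioc (0:ℝ) 1, Tendsto f (𝓝[<] t) (𝓝 (fl t))
  fl_zero : fl 0 = 0
  nonneg : ∀ t ∈ Icc (0:ℝ) 1, 0 ≤ f t
  fl_le : ∀ t ∈ Icc (0:ℝ) 1, fl t ≤ f t

namespace IsCodingFunction

variable {f fl : ℝ → ℝ}

theorem bddBelow_image (hf : IsCodingFunction f fl) {s t : ℝ} (h0 : 0 ≤ s) (h1 : t ≤ 1) :
    BddBelow (f '' Icc s t) :=
  ⟨0, forall_mem_image.2 fun u hu => hf.nonneg u ⟨h0.trans hu.1, hu.2.trans h1⟩⟩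

theorem infIcc_le (hf : IsCodingFunction f fl) {s t u : ℝ} (h0 : 0 ≤ s) (h1 : t ≤ 1)
    (hu : u ∈ Icc s t) : infIcc f s t ≤ f u :=
  csInf_le (hf.bddBelow_image h0 h1) (mem_image_of_mem f hu)

theorem infIcc_eq_min (hf : IsCodingFunction f fl) {r u v : ℝ} (h0 : 0 ≤ r) (hru : r ≤ u)
    (huv : u ≤ v) (h1 : v ≤ 1) : infIcc f r v = min (infIcc f r u) (infIcc f u v) := by
  rw [infIcc, ← Icc_union_Icc_eq_Icc hru huv, image_union,
    csInf_union (hf.bddBelow_image h0 (huv.trans h1)) ((nonempty_Icc.2 hru).image f)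
      (hf.bddBelow_image (h0.trans hru) h1) ((nonempty_Icc.2 huv).image f)]
  rfl

theorem infIcc_le_infIcc_left (hf : IsCodingFunction f fl) {r u v : ℝ} (h0 : 0 ≤ r)
    (hru : r ≤ u) (huv : u ≤ v) (h1 : v ≤ 1) : infIcc f r v ≤ infIcc f r u :=
  (hf.infIcc_eq_min h0 hru huv h1).trans_le (min_le_left _ _)

theorem infIcc_le_infIcc_right (hf : IsCodingFunction f fl) {r u v : ℝ} (h0 : 0 ≤ r)
    (hru : r ≤ u) (huv : u ≤ v) (h1 : v ≤ 1) : infIcc f r v ≤ infIcc f u v :=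
  (hf.infIcc_eq_min h0 hru huv h1).trans_le (min_le_right _ _)

theorem le_fl (hf : IsCodingFunction f fl) {a r c : ℝ} (hr : r ∈ Ioc (0:ℝ) 1) (har : a < r)
    (hc : ∀ u ∈ Ioo a r, c ≤ f u) : c ≤ fl r :=
  ge_of_tendsto (hf.tendsto_left r hr) (eventually_of_mem (Ioo_mem_nhdsLT har) hc)

theorem fl_nonneg (hf : IsCodingFunction f fl) {t : ℝ} (ht : t ∈ Icc (0:ℝ) 1) : 0 ≤ fl t := by
  rcases ht.1.eq_or_lt with rfl | h
  · exact hf.fl_zero.ge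
  · exact hf.le_fl ⟨h, ht.2⟩ h fun u hu => hf.nonneg u ⟨hu.1.le, hu.2.le.trans ht.2⟩

theorem infIcc_le_fl (hf : IsCodingFunction f fl) {s r t : ℝ} (h0 : 0 ≤ s) (hsr : s < r)
    (hrt : r ≤ t) (h1 : t ≤ 1) : infIcc f s t ≤ fl r :=
  hf.le_fl ⟨h0.trans_lt hsr, hrt.trans h1⟩ hsr fun _ hu =>
    hf.infIcc_le h0 h1 ⟨hu.1.le, hu.2.le.trans hrt⟩

theorem eventually_lt_fl (hf : IsCodingFunction f fl) {c γ : ℝ} (hc : c ∈ Ioc (0:ℝ) 1)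
    (hγ : γ < fl c) : ∀ᶠ a in 𝓝[≤] c, γ < fl a := by
  obtain ⟨γ', hγγ', hγ'⟩ := exists_between hγ
  obtain ⟨l, hl, hsub⟩ := mem_nhdsLT_iff_exists_Ioo_subset.1
    ((hf.tendsto_left c hc).eventually (eventually_gt_nhds hγ'))
  filter_upwards [Ioc_mem_nhdsLE (max_lt hl hc.1)] with a ⟨hla, hac⟩
  rcases hac.eq_or_lt with rfl | hac
  · exact hγ
  · refine hγγ'.trans_le (hf.le_fl ⟨(le_max_right l 0).trans_lt hla, hac.le.trans hc.2⟩
      ((le_max_left l 0).trans_lt hla) fun _ hu => (hsub ⟨hu.1, hu.2.trans hac⟩).le)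

theorem jump_nonneg (hf : IsCodingFunction f fl) {t : ℝ} (ht : t ∈ Icc (0:ℝ) 1) :
    0 ≤ jump f fl t :=
  sub_nonneg.2 (hf.fl_le t ht)

theorem bddAbove_image (hf : IsCodingFunction f fl) : BddAbove (f '' Icc 0 1) := by
  refine isCompact_Icc.bddAbove_image_of_eventually_le fun x hx =>
    ⟨max (fl x) (f x) + 1, eventually_nhdsWithin_Icc_of_sides (fun h0x => ?_) ?_ fun hx1 => ?_⟩
  · filter_upwards [(hf.tendsto_left x ⟨h0x, hx.2⟩).eventually (eventually_le_nhds
      (lt_add_one (fl x)))] with y hy using hy.trans (by gcongr; exact le_max_left _ _)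
  · linarith [le_max_right (fl x) (f x)]
  · filter_upwards [nhdsWithin_mono x Ioi_subset_Ici_self
      ((hf.tendsto_right x ⟨hx.1, hx1⟩).eventually (eventually_le_nhds (lt_add_one (f x))))]
      with y hy using hy.trans (by gcongr; exact le_max_right _ _)

theorem xpos_le_jump (hf : IsCodingFunction f fl) {m u : ℝ} (h0 : 0 ≤ m) (h1 : u ≤ 1)
    (h : Prec f fl m u) : xpos f fl m u ≤ jump f fl m :=
  sub_le_sub_right (hf.infIcc_le h0 h1 ⟨le_rfl, h.1⟩) _

theorem prec_refl (hf : IsCodingFunction f fl) {t : ℝ} (ht : t ∈ Icc (0:ℝ) 1) :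
    Prec f fl t t :=
  ⟨le_rfl, (infIcc_self t).symm ▸ hf.fl_le t ht⟩

theorem zero_prec (hf : IsCodingFunction f fl) {t : ℝ} (ht : t ∈ Icc (0:ℝ) 1) :
    Prec f fl 0 t := by
  refine ⟨ht.1, ?_⟩
  rw [hf.fl_zero]
  exact le_infIcc ht.1 fun u hu => hf.nonneg u ⟨hu.1, hu.2.trans ht.2⟩

theorem prec_of_le_of_le (hf : IsCodingFunction f fl) {r u v : ℝ} (h0 : 0 ≤ r) (h1 : v ≤ 1)
    (h : Prec f fl r v) (hru : r ≤ u) (huv : u ≤ v) : Prec f fl r u :=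
  ⟨hru, h.2.trans (hf.infIcc_le_infIcc_left h0 hru huv h1)⟩

theorem prec_trans (hf : IsCodingFunction f fl) {r s t : ℝ} (h0 : 0 ≤ r) (h1 : t ≤ 1)
    (hrs : Prec f fl r s) (hst : Prec f fl s t) : Prec f fl r t := by
  rcases hrs.1.eq_or_lt with rfl | hlt
  · exact hst
  refine ⟨hrs.1.trans hst.1, ?_⟩
  rw [hf.infIcc_eq_min h0 hrs.1 hst.1 h1]
  exact le_min hrs.2 (hrs.2.trans ((hf.infIcc_le_fl h0 hlt le_rfl (hst.1.trans h1)).trans hst.2))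

theorem infIcc_eq_of_lt_of_prec (hf : IsCodingFunction f fl) {r m u : ℝ} (h0 : 0 ≤ r)
    (hrm : r < m) (hmu : Prec f fl m u) (h1 : u ≤ 1) : infIcc f r u = infIcc f r m := by
  rw [hf.infIcc_eq_min h0 hrm.le hmu.1 h1]
  exact min_eq_left ((hf.infIcc_le_fl h0 hrm le_rfl (hmu.1.trans h1)).trans hmu.2)

theorem prec_sSup (hf : IsCodingFunction f fl) {A : Set ℝ} {s : ℝ} (hs : s ∈ Icc (0:ℝ) 1)
    (hA : ∀ r ∈ A, 0 ≤ r ∧ Prec f fl r s) (hne : A.Nonempty) : Prec f fl (sSup A) s := by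
  have hlub : IsLUB A (sSup A) := isLUB_csSup hne ⟨s, fun r hr => (hA r hr).2.1⟩
  obtain ⟨a, ha⟩ := hne
  have hc0 : 0 ≤ sSup A := (hA a ha).1.trans (hlub.1 ha)
  have hcs : sSup A ≤ s := hlub.2 fun r hr => (hA r hr).2.1
  by_contra hcon
  have hlt : infIcc f (sSup A) s < fl (sSup A) := lt_of_not_ge fun h => hcon ⟨hcs, h⟩
  have hc : sSup A ∈ Ioc (0:ℝ) 1 := by
    refine ⟨hc0.lt_of_ne fun h => ?_, hcs.trans hs.2⟩
    rw [← h, hf.fl_zero] at hlt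
    exact hlt.not_ge (le_infIcc hs.1 fun u hu => hf.nonneg u ⟨hu.1, hu.2.trans hs.2⟩)
  -- ancestors of `s` accumulate at `sSup A` from the left, where `fl` stays above `I_{sSup A}^s`
  obtain ⟨b, hbA, hb⟩ :=
    ((hlub.frequently_mem ⟨a, ha⟩).and_eventually (hf.eventually_lt_fl hc hlt)).exists
  have hb' := hA b hbA
  exact hb.not_ge (hb'.2.2.trans (hf.infIcc_le_infIcc_right hb'.1 (hlub.1 hbA) hcs hs.2))

theorem mca_prec_left (hf : IsCodingFunction f fl) {s t : ℝ} (hs : s ∈ Icc (0:ℝ) 1)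
    (ht : t ∈ Icc (0:ℝ) 1) : Prec f fl (mca f fl s t) s :=
  hf.prec_sSup hs (fun _ h => ⟨h.1.1, h.2.1⟩)
    ⟨0, ⟨le_rfl, zero_le_one⟩, hf.zero_prec hs, hf.zero_prec ht⟩

theorem mca_prec_right (hf : IsCodingFunction f fl) {s t : ℝ} (hs : s ∈ Icc (0:ℝ) 1)
    (ht : t ∈ Icc (0:ℝ) 1) : Prec f fl (mca f fl s t) t :=
  mca_comm (f := f) (fl := fl) t s ▸ hf.mca_prec_left ht hs

theorem mca_mem_Icc (hf : IsCodingFunction f fl) {s t : ℝ} (hs : s ∈ Icc (0:ℝ) 1)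
    (ht : t ∈ Icc (0:ℝ) 1) : mca f fl s t ∈ Icc (0:ℝ) 1 :=
  ⟨le_mca ⟨le_rfl, zero_le_one⟩ (hf.zero_prec hs) (hf.zero_prec ht),
    (hf.mca_prec_left hs ht).1.trans hs.2⟩

theorem mca_eq_left (hf : IsCodingFunction f fl) {s t : ℝ} (hs : s ∈ Icc (0:ℝ) 1)
    (ht : t ∈ Icc (0:ℝ) 1) (h : Prec f fl s t) : mca f fl s t = s :=
  le_antisymm (hf.mca_prec_left hs ht).1 (le_mca hs (hf.prec_refl hs) h)

theorem mca_self (hf : IsCodingFunction f fl) {s : ℝ} (hs : s ∈ Icc (0:ℝ) 1) :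
    mca f fl s s = s :=
  hf.mca_eq_left hs hs (hf.prec_refl hs)

theorem sum_ancestralLine_le (hf : IsCodingFunction f fl) {s t A B : ℝ} (hs0 : 0 ≤ s)
    (ht : t ∈ Icc (0:ℝ) 1) (hAB : A ≤ B)
    (h : ∀ r ∈ ancestralLine f fl s t, r ≠ t → A ≤ fl r ∧ infIcc f r t ≤ B)
    (F : Finset (ancestralLine f fl s t)) :
    ∑ r ∈ F, cycleDist (jump f fl r) 0 (xpos f fl r t) ≤ B - A := by
  classical
  set G := F.map (Function.Embedding.subtype _)
  have hG : ∀ r ∈ G.erase t, r ∈ ancestralLine f fl s t ∧ r ≠ t := by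
    intro r hr
    obtain ⟨x, -, rfl⟩ := Finset.mem_map.1 (Finset.mem_of_mem_erase hr)
    exact ⟨x.2, Finset.ne_of_mem_erase hr⟩
  calc ∑ r ∈ F, cycleDist (jump f fl r) 0 (xpos f fl r t)
      = ∑ r ∈ G, cycleDist (jump f fl r) 0 (xpos f fl r t) := by
        rw [Finset.sum_map, Function.Embedding.coe_subtype]
    _ = ∑ r ∈ G.erase t, cycleDist (jump f fl r) 0 (xpos f fl r t) :=
        (G.sum_erase (by rw [xpos_self]; exact cycleDist_zero_self (hf.jump_nonneg ht))).symm
    _ ≤ ∑ r ∈ G.erase t, (infIcc f r t - fl r) :=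
        Finset.sum_le_sum fun r hr => cycleDist_zero_le (xpos_nonneg (hG r hr).1.2.2)
    _ ≤ B - A :=
        Finset.sum_sub_le_of_chain _ hAB (fun r hr => (h r (hG r hr).1 (hG r hr).2).1)
          (fun r hr => (h r (hG r hr).1 (hG r hr).2).2) fun r hr r' hr' hrr' =>
            hf.infIcc_le_fl (hs0.trans (hG r hr).1.1.1) hrr' (hG r' hr').1.2.2.1 ht.2

theorem summable_dZero (hf : IsCodingFunction f fl) {s t : ℝ} (hs0 : 0 ≤ s) (hst : s ≤ t)
    (ht : t ∈ Icc (0:ℝ) 1) :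
    Summable fun r : ancestralLine f fl s t => cycleDist (jump f fl r) 0 (xpos f fl r t) := by
  refine summable_of_sum_le (fun r => ?_) (hf.sum_ancestralLine_le hs0 ht
    (hf.infIcc_le hs0 ht.2 ⟨hst, le_rfl⟩) fun r hr _ =>
      ⟨hf.infIcc_le_fl hs0 (hr.1.1.lt_of_ne hr.2.1) hr.2.2.1 ht.2,
        hf.infIcc_le (hs0.trans hr.1.1) ht.2 ⟨hr.2.2.1, le_rfl⟩⟩)
  have hr := mem_Icc_of_mem_ancestralLine hs0 ht.2 r.2
  exact cycleDist_nonneg ⟨le_rfl, hf.jump_nonneg hr⟩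
    ⟨xpos_nonneg r.2.2.2, hf.xpos_le_jump hr.1 ht.2 r.2.2.2⟩

theorem dZero_le (hf : IsCodingFunction f fl) {s t A B : ℝ} (hs0 : 0 ≤ s) (hst : s ≤ t)
    (ht : t ∈ Icc (0:ℝ) 1) (hAB : A ≤ B)
    (h : ∀ r ∈ ancestralLine f fl s t, r ≠ t → A ≤ fl r ∧ infIcc f r t ≤ B) :
    dZero f fl s t ≤ B - A :=
  (hf.summable_dZero hs0 hst ht).tsum_le_of_sum_le (hf.sum_ancestralLine_le hs0 ht hAB h)

theorem loopPos_mem (hf : IsCodingFunction f fl) {r u : ℝ} (hr : r ∈ Icc (0:ℝ) 1)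
    (hu : u ≤ 1) : loopPos f fl r u ∈ Icc 0 (jump f fl r) := by
  by_cases h : Prec f fl r u
  · rw [loopPos_of_prec h]
    exact ⟨xpos_nonneg h, hf.xpos_le_jump hr.1 hu h⟩
  · rw [loopPos_of_not_prec h]
    exact ⟨le_rfl, hf.jump_nonneg hr⟩

theorem loopPos_eq_of_lt_of_prec (hf : IsCodingFunction f fl) {r m u : ℝ} (h0 : 0 ≤ r)
    (hrm : r < m) (hmu : Prec f fl m u) (h1 : u ≤ 1) : loopPos f fl r u = loopPos f fl r m := by
  have hI := hf.infIcc_eq_of_lt_of_prec h0 hrm hmu h1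
  simp only [loopPos, Prec, xpos, hI, hrm.le, hrm.le.trans hmu.1, true_and]

theorem loopDist_nonneg (hf : IsCodingFunction f fl) {s t : ℝ} (hs : s ≤ 1) (ht : t ≤ 1)
    (r : ℝ) : 0 ≤ loopDist f fl s t r :=
  indicator_nonneg (fun _ hr => cycleDist_nonneg (hf.loopPos_mem hr hs) (hf.loopPos_mem hr ht)) r

theorem loopDist_triangle (hf : IsCodingFunction f fl) {s t w : ℝ} (hs : s ≤ 1) (ht : t ≤ 1)
    (hw : w ≤ 1) (r : ℝ) : loopDist f fl s t r ≤ loopDist f fl s w r + loopDist f fl w t r := by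
  by_cases hr : r ∈ Icc (0:ℝ) 1
  · simp only [loopDist, indicator_of_mem hr]
    exact cycleDist_triangle (hf.loopPos_mem hr hs) (hf.loopPos_mem hr hw) (hf.loopPos_mem hr ht)
  · simp only [loopDist, indicator_of_notMem hr, add_zero, le_refl]

theorem indicator_ancestralLine_eq (hf : IsCodingFunction f fl) {m r u : ℝ} (h0 : 0 ≤ m)
    (hmr : m < r) (hmu : Prec f fl m u) (hu : u ≤ 1) (hr : r ∈ Icc (0:ℝ) 1) :
    (ancestralLine f fl m u).indicator (fun r => cycleDist (jump f fl r) 0 (xpos f fl r u)) r =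
      cycleDist (jump f fl r) 0 (loopPos f fl r u) := by
  by_cases hru : Prec f fl r u
  · have hline : r ∈ ancestralLine f fl m u :=
      ⟨hf.prec_of_le_of_le h0 hu hmu hmr.le hru.1, hmr.ne, hru⟩
    rw [indicator_of_mem hline, loopPos_of_prec hru]
  · rw [indicator_of_notMem fun h => hru h.2.2, loopPos_of_not_prec hru,
      cycleDist_self (hf.jump_nonneg hr)]

theorem loopDist_eq (hf : IsCodingFunction f fl) {s t : ℝ} (hs : s ∈ Icc (0:ℝ) 1)
    (ht : t ∈ Icc (0:ℝ) 1) (r : ℝ) :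
    loopDist f fl s t r =
      (if r = mca f fl s t then cycleDist (jump f fl (mca f fl s t))
        (xpos f fl (mca f fl s t) s) (xpos f fl (mca f fl s t) t) else 0) +
      (ancestralLine f fl (mca f fl s t) s).indicator
        (fun r => cycleDist (jump f fl r) 0 (xpos f fl r s)) r +
      (ancestralLine f fl (mca f fl s t) t).indicator
        (fun r => cycleDist (jump f fl r) 0 (xpos f fl r t)) r := by
  set m := mca f fl s t
  have hm := hf.mca_mem_Icc hs ht
  have hms := hf.mca_prec_left hs ht
  have hmt := hf.mca_prec_right hs ht
  have hline : ∀ {u r}, r ∈ ancestralLine f fl m u → m < r := fun h => h.1.1.lt_of_ne h.2.1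
  by_cases hr : r ∈ Icc (0:ℝ) 1
  swap
  · have hrm : r ≠ m := fun h => hr (h ▸ hm)
    have hnot : ∀ {u}, u ≤ 1 → r ∉ ancestralLine f fl m u := fun hu h =>
      hr (mem_Icc_of_mem_ancestralLine hm.1 hu h)
    simp only [loopDist, indicator_of_notMem hr, if_neg hrm, indicator_of_notMem (hnot hs.2),
      indicator_of_notMem (hnot ht.2), add_zero]
  rw [loopDist, indicator_of_mem hr]
  rcases lt_trichotomy r m with hrm | rfl | hmr
  · rw [hf.loopPos_eq_of_lt_of_prec hr.1 hrm hms hs.2,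
      hf.loopPos_eq_of_lt_of_prec hr.1 hrm hmt ht.2, cycleDist_self (hf.jump_nonneg hr),
      if_neg hrm.ne, indicator_of_notMem fun h => (hline h).not_gt hrm,
      indicator_of_notMem fun h => (hline h).not_gt hrm, add_zero, add_zero]
  · rw [loopPos_of_prec hms, loopPos_of_prec hmt, if_pos rfl,
      indicator_of_notMem fun h => lt_irrefl m (hline h),
      indicator_of_notMem fun h => lt_irrefl m (hline h), add_zero, add_zero]
  · rw [if_neg hmr.ne', zero_add, hf.indicator_ancestralLine_eq hm.1 hmr hms hs.2 hr,
      hf.indicator_ancestralLine_eq hm.1 hmr hmt ht.2 hr]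
    have hΔ := hf.jump_nonneg hr
    by_cases hrs : Prec f fl r s
    · have hrt : ¬ Prec f fl r t := fun hrt => (le_mca hr hrs hrt).not_gt hmr
      rw [loopPos_of_not_prec hrt, cycleDist_self hΔ, add_zero, cycleDist_comm]
    · rw [loopPos_of_not_prec hrs, cycleDist_self hΔ, zero_add]

theorem hasSum_loopDist (hf : IsCodingFunction f fl) {s t : ℝ} (hs : s ∈ Icc (0:ℝ) 1)
    (ht : t ∈ Icc (0:ℝ) 1) : HasSum (loopDist f fl s t) (looptreeDist f fl s t) := by
  have hm := hf.mca_mem_Icc hs ht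
  have hms := hf.mca_prec_left hs ht
  have hmt := hf.mca_prec_right hs ht
  rw [funext (hf.loopDist_eq hs ht)]
  exact ((hasSum_ite_eq (mca f fl s t) _).add
    (hasSum_subtype_iff_indicator.1 (hf.summable_dZero hm.1 hms.1 hs).hasSum)).add
    (hasSum_subtype_iff_indicator.1 (hf.summable_dZero hm.1 hmt.1 ht).hasSum)

theorem looptreeDist_nonneg (hf : IsCodingFunction f fl) {s t : ℝ} (hs : s ∈ Icc (0:ℝ) 1)
    (ht : t ∈ Icc (0:ℝ) 1) : 0 ≤ looptreeDist f fl s t :=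
  (hf.hasSum_loopDist hs ht).nonneg (hf.loopDist_nonneg hs.2 ht.2)

theorem looptreeDist_triangle (hf : IsCodingFunction f fl) {s t w : ℝ}
    (hs : s ∈ Icc (0:ℝ) 1) (ht : t ∈ Icc (0:ℝ) 1) (hw : w ∈ Icc (0:ℝ) 1) :
    looptreeDist f fl s t ≤ looptreeDist f fl s w + looptreeDist f fl w t :=
  hasSum_le (hf.loopDist_triangle hs.2 ht.2 hw.2) (hf.hasSum_loopDist hs ht)
    ((hf.hasSum_loopDist hs hw).add (hf.hasSum_loopDist hw ht))

theorem looptreeDist_self (hf : IsCodingFunction f fl) {s : ℝ} (hs : s ∈ Icc (0:ℝ) 1) :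
    looptreeDist f fl s s = 0 := by
  rw [looptreeDist, hf.mca_self hs, dZero_self, cycleDist_self (hf.jump_nonneg hs), add_zero,
    add_zero]

theorem looptreeDist_le_add (hf : IsCodingFunction f fl) {s t : ℝ} (hs : s ∈ Icc (0:ℝ) 1)
    (ht : t ∈ Icc (0:ℝ) 1) : looptreeDist f fl s t ≤ f s + f t := by
  set m := mca f fl s t
  have hm := hf.mca_mem_Icc hs ht
  have hline : ∀ {u}, u ∈ Icc (0:ℝ) 1 → Prec f fl m u → dZero f fl m u ≤ f u - infIcc f m u :=
    fun hu hmu => hf.dZero_le hm.1 hmu.1 hu (hf.infIcc_le hm.1 hu.2 ⟨hmu.1, le_rfl⟩)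
      fun r hr _ => ⟨hf.infIcc_le_fl hm.1 (hr.1.1.lt_of_ne hr.2.1) hr.2.2.1 hu.2,
        hf.infIcc_le (hm.1.trans hr.1.1) hu.2 ⟨hr.2.2.1, le_rfl⟩⟩
  have hms := hf.mca_prec_left hs ht
  have hmt := hf.mca_prec_right hs ht
  have hcycle : cycleDist (jump f fl m) (xpos f fl m s) (xpos f fl m t) ≤
      xpos f fl m s + xpos f fl m t :=
    (cycleDist_le_abs _ _ _).trans ((abs_sub _ _).trans_eq (by
      rw [abs_of_nonneg (xpos_nonneg hms), abs_of_nonneg (xpos_nonneg hmt)]))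
  have hxs : xpos f fl m s = infIcc f m s - fl m := rfl
  have hxt : xpos f fl m t = infIcc f m t - fl m := rfl
  rw [looptreeDist]
  linarith [hline hs hms, hline ht hmt, hf.fl_nonneg hm]

theorem dZero_le_of_forall_mem_Ico (hf : IsCodingFunction f fl) {m u v A B : ℝ} (hm0 : 0 ≤ m)
    (hmv : m ≤ v) (hu0 : 0 ≤ u) (hv1 : v ≤ 1) (hAB : A ≤ B) (hA : ∀ x ∈ Ioo u v, A ≤ f x)
    (hB : ∀ x ∈ Ico u v, f x ≤ B) (hline : ∀ r ∈ ancestralLine f fl m v, u < r) :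
    dZero f fl m v ≤ B - A :=
  hf.dZero_le hm0 hmv ⟨hm0.trans hmv, hv1⟩ hAB fun r hr hrv =>
    ⟨hf.le_fl ⟨hu0.trans_lt (hline r hr), hr.2.2.1.trans hv1⟩ (hline r hr) fun x hx =>
        hA x ⟨hx.1, hx.2.trans_le hr.2.2.1⟩,
      (hf.infIcc_le (hu0.trans (hline r hr).le) hv1 ⟨le_rfl, hr.2.2.1⟩).trans
        (hB r ⟨(hline r hr).le, hr.2.2.1.lt_of_ne hrv⟩)⟩

theorem looptreeDist_le_of_forall_mem_Icc (hf : IsCodingFunction f fl) {u v A B : ℝ}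
    (hu0 : 0 ≤ u) (huv : u < v) (hv1 : v ≤ 1) (hA : ∀ x ∈ Icc u v, A ≤ f x)
    (hB : ∀ x ∈ Ico u v, f x ≤ B) : looptreeDist f fl u v ≤ 3 * (B - A) := by
  have hu : u ∈ Icc (0:ℝ) 1 := ⟨hu0, huv.le.trans hv1⟩
  have hv : v ∈ Icc (0:ℝ) 1 := ⟨hu0.trans huv.le, hv1⟩
  have hfu : f u ≤ B := hB u ⟨le_rfl, huv⟩
  have hAI : A ≤ infIcc f u v := le_infIcc huv.le hA
  have hAB : A ≤ B := hAI.trans ((hf.infIcc_le hu0 hv1 ⟨le_rfl, huv.le⟩).trans hfu)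
  set m := mca f fl u v
  have hm := hf.mca_mem_Icc hu hv
  have hmu := hf.mca_prec_left hu hv
  have hmv := hf.mca_prec_right hu hv
  have hsplit : ∀ r, 0 ≤ r → r ≤ u → infIcc f r v = min (infIcc f r u) (infIcc f u v) :=
    fun r hr hru => hf.infIcc_eq_min hr hru huv.le hv1
  have hcycle : cycleDist (jump f fl m) (xpos f fl m u) (xpos f fl m v) ≤ B - A := by
    refine (cycleDist_le_abs _ _ _).trans (abs_le.2 ⟨?_, ?_⟩) <;> simp only [xpos] <;>
      cases min_cases (infIcc f m u) (infIcc f u v) <;>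
      linarith [hsplit m hm.1 hmu.1, hf.infIcc_le hm.1 hu.2 ⟨hmu.1, le_rfl⟩]
  have hdu : dZero f fl m u ≤ B - A := by
    refine hf.dZero_le hm.1 hmu.1 hu hAB fun r hr _ => ⟨?_, ?_⟩
    · -- `r` is not an ancestor of `v`, so `f` drops below `f(r-)` on `[u, v]`
      have hrv : ¬ Prec f fl r v := fun hrv =>
        (le_mca (mem_Icc_of_mem_ancestralLine hm.1 hu.2 hr) hr.2.2 hrv).not_gt
          (hr.1.1.lt_of_ne hr.2.1)
      have hlt : infIcc f r v < fl r := lt_of_not_ge fun h => hrv ⟨hr.2.2.1.trans huv.le, h⟩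
      rw [hsplit r (hm.1.trans hr.1.1) hr.2.2.1] at hlt
      cases min_cases (infIcc f r u) (infIcc f u v) <;> linarith [hr.2.2.2]
    · exact (hf.infIcc_le (hm.1.trans hr.1.1) hu.2 ⟨hr.2.2.1, le_rfl⟩).trans hfu
  have hdv : dZero f fl m v ≤ B - A :=
    hf.dZero_le_of_forall_mem_Ico hm.1 hmv.1 hu0 hv1 hAB (fun x hx => hA x (Ioo_subset_Icc_self hx))
      hB fun r hr => lt_of_not_ge fun hru =>
        (le_mca (mem_Icc_of_mem_ancestralLine hm.1 hv1 hr)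
          (hf.prec_of_le_of_le (hm.1.trans hr.1.1) hv1 hr.2.2 hru huv.le) hr.2.2).not_gt
          (hr.1.1.lt_of_ne hr.2.1)
  rw [looptreeDist]
  linarith

theorem tendsto_looptreeDist (hf : IsCodingFunction f fl) {s : ℝ} (hs : s ∈ Icc (0:ℝ) 1) :
    Tendsto (fun u => looptreeDist f fl u s) (𝓝[Icc 0 1] s) (𝓝 0) := by
  refine tendsto_order.2 ⟨fun a ha => ?_, fun ε hε => ?_⟩
  · filter_upwards [self_mem_nhdsWithin] with u hu
    exact ha.trans_le (hf.looptreeDist_nonneg hu hs)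
  obtain ⟨η, hη, hsmall⟩ : ∃ η > 0, 6 * η < ε := ⟨ε / 7, by positivity, by linarith⟩
  have hleft : 0 < s → ∀ᶠ u in 𝓝[<] s, u ∈ Icc (0:ℝ) 1 → looptreeDist f fl u s < ε := by
    intro h0s
    have hwin : f ⁻¹' Ioo (fl s - η) (fl s + η) ∈ 𝓝[<] s :=
      hf.tendsto_left s ⟨h0s, hs.2⟩ (Ioo_mem_nhds (by linarith) (by linarith))
    filter_upwards [eventually_Ico_subset_of_mem_nhdsLT hwin, self_mem_nhdsWithin]
      with u hsub (hus : u < s) hu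
    refine (hf.looptreeDist_le_of_forall_mem_Icc hu.1 hus hs.2 (A := fl s - η) (B := fl s + η)
      (fun x hx => ?_) fun x hx => (hsub hx).2.le).trans_lt (by linarith)
    rcases hx.2.eq_or_lt with rfl | hxs
    · linarith [hf.fl_le x hs]
    · exact (hsub ⟨hx.1, hxs⟩).1.le
  have hright : s < 1 → ∀ᶠ u in 𝓝[>] s, u ∈ Icc (0:ℝ) 1 → looptreeDist f fl u s < ε := by
    intro hs1
    have hwin : f ⁻¹' Ioo (f s - η) (f s + η) ∈ 𝓝[≥] s :=
      hf.tendsto_right s ⟨hs.1, hs1⟩ (Ioo_mem_nhds (by linarith) (by linarith))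
    filter_upwards [nhdsWithin_mono s Ioi_subset_Ici_self
      (eventually_Icc_subset_of_mem_nhdsGE hwin), self_mem_nhdsWithin] with u hsub (hsu : s < u) hu
    rw [looptreeDist_comm]
    exact (hf.looptreeDist_le_of_forall_mem_Icc hs.1 hsu hu.2 (A := f s - η) (B := f s + η)
      (fun x hx => (hsub hx).1.le) fun x hx => (hsub (Ico_subset_Icc_self hx)).2.le).trans_lt
      (by linarith)
  filter_upwards [self_mem_nhdsWithin, eventually_nhdsWithin_Icc_of_sides hleft
    (fun _ => hf.looptreeDist_self hs ▸ hε) hright] with u hu h using h hu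

theorem continuousOn_looptreeDist (hf : IsCodingFunction f fl) :
    ContinuousOn (fun p : ℝ × ℝ => looptreeDist f fl p.1 p.2) (Icc 0 1 ×ˢ Icc 0 1) :=
  continuousOn_of_triangle_of_tendsto_zero (fun s _ t _ => looptreeDist_comm s t)
    (fun _ hs _ hw _ ht => hf.looptreeDist_triangle hs ht hw) fun _ hs => hf.tendsto_looptreeDist hs

end IsCodingFunction

theorem looptreeDist_pseudoDist_continuous_general (f fl : ℝ → ℝ)
    (hf_right : ∀ t ∈ Set.Ico (0:ℝ) 1, Filter.Tendsto f (nhdsWithin t (Set.Ici t)) (nhds (f t)))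
    (hf_left : ∀ t ∈ Set.Ioc (0:ℝ) 1, Filter.Tendsto f (nhdsWithin t (Set.Iio t)) (nhds (fl t)))
    (hfl0 : fl 0 = 0)
    (hf_nonneg : ∀ t ∈ Set.Icc (0:ℝ) 1, 0 ≤ f t)
    (hf_jump : ∀ t ∈ Set.Icc (0:ℝ) 1, fl t ≤ f t) :
    BddAbove (f '' Set.Icc (0:ℝ) 1) ∧
    (∀ s ∈ Set.Icc (0:ℝ) 1, ∀ t ∈ Set.Icc (0:ℝ) 1,
      0 ≤ looptreeDist f fl s t ∧
      looptreeDist f fl s t ≤ 2 * sSup (f '' Set.Icc (0:ℝ) 1) ∧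
      looptreeDist f fl s s = 0 ∧
      looptreeDist f fl s t = looptreeDist f fl t s ∧
      ∀ r ∈ Set.Icc (0:ℝ) 1,
        looptreeDist f fl s t ≤ looptreeDist f fl s r + looptreeDist f fl r t) ∧
    ContinuousOn (fun p : ℝ × ℝ => looptreeDist f fl p.1 p.2)
      (Set.Icc (0:ℝ) 1 ×ˢ Set.Icc (0:ℝ) 1) := by
  have hf : IsCodingFunction f fl := ⟨hf_right, hf_left, hfl0, hf_nonneg, hf_jump⟩
  have hsup : ∀ u ∈ Icc (0:ℝ) 1, f u ≤ sSup (f '' Icc 0 1) := fun u hu =>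
    le_csSup hf.bddAbove_image (mem_image_of_mem f hu)
  refine ⟨hf.bddAbove_image, fun s hs t ht => ⟨hf.looptreeDist_nonneg hs ht, ?_,
    hf.looptreeDist_self hs, looptreeDist_comm s t, fun r hr => hf.looptreeDist_triangle hs ht hr⟩,
    hf.continuousOn_looptreeDist⟩
  linarith [hf.looptreeDist_le_add hs ht, hsup s hs, hsup t ht]

/-- d is a continuous pseudo-distance on [0,1]²:
0 ≤ d(s,t) ≤ 2 sup f < ∞, d(s,s) = 0, symmetry, triangle inequality, and continuity. -/
theorem looptreeDist_pseudoDist_continuous (f fl : ℝ → ℝ)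
    (hf_right : ∀ t ∈ Set.Ico (0:ℝ) 1, Filter.Tendsto f (nhdsWithin t (Set.Ici t)) (nhds (f t)))
    (hf_left : ∀ t ∈ Set.Ioc (0:ℝ) 1, Filter.Tendsto f (nhdsWithin t (Set.Iio t)) (nhds (fl t)))
    (hfl0 : fl 0 = 0)
    (hf_nonneg : ∀ t ∈ Set.Icc (0:ℝ) 1, 0 ≤ f t)
    (hf_jump : ∀ t ∈ Set.Icc (0:ℝ) 1, fl t ≤ f t)
    (hf0 : f 0 = 0) (hf1 : f 1 = 0) :
    BddAbove (f '' Set.Icc (0:ℝ) 1) ∧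
    (∀ s ∈ Set.Icc (0:ℝ) 1, ∀ t ∈ Set.Icc (0:ℝ) 1,
      0 ≤ looptreeDist f fl s t ∧
      looptreeDist f fl s t ≤ 2 * sSup (f '' Set.Icc (0:ℝ) 1) ∧
      looptreeDist f fl s s = 0 ∧
      looptreeDist f fl s t = looptreeDist f fl t s ∧
      ∀ r ∈ Set.Icc (0:ℝ) 1,
        looptreeDist f fl s t ≤ looptreeDist f fl s r + looptreeDist f fl r t) ∧
    ContinuousOn (fun p : ℝ × ℝ => looptreeDist f fl p.1 p.2)
      (Set.Icc (0:ℝ) 1 ×ˢ Set.Icc (0:ℝ) 1) :=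
  looptreeDist_pseudoDist_continuous_general f fl hf_right hf_left hfl0 hf_nonneg hf_jump
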